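/- arXiv:2102.04230 — 4 statements merged into one kernel-verified Lean document; each statement's English description precedes it below -/
import Mathlib

section
/- Conversely, if P_1 is a type of length n−t that is a type of P_x after t deletions (where x ∈ Z_ℓ^n), then there exists a vector y ∈ Z_ℓ^{n−t} obtained from x by deleting t components such that P_y = P_1. -/
/-- The type (empirical distribution) of a vector `x ∈ Z_ℓ^n`. -/
def vecType {n ℓ : ℕ} (x : Fin n → Fin ℓ) : Fin ℓ → ℚ :=
  fun a => ((Finset.univ.filter (fun i => x i = a)).card : ℚ) / n

/-- `P` is a type of length `n` on the alphabet `Z_ℓ`. -/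
def IsType (ℓ n : ℕ) (P : Fin ℓ → ℚ) : Prop :=
  (∀ a, ∃ m : ℕ, P a = (m : ℚ) / n) ∧ ∑ a, P a = 1

/-- `P1` (of length `n - t`) is a type of `P2` (of length `n`) after `t` deletions. -/
def TypeAfterDel (ℓ n t : ℕ) (P1 P2 : Fin ℓ → ℚ) : Prop :=
  (∀ a, ((n - t : ℕ) : ℚ) * P1 a ≤ (n : ℚ) * P2 a) ∧
    ∑ a, ((n : ℚ) * P2 a - ((n - t : ℕ) : ℚ) * P1 a) = (t : ℚ)

/-!
Write `c a` for the number of occurrences of the symbol `a` in `x` and `m a = (n - t) P₁(a)`.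
The hypotheses say exactly that `m a ≤ c a` for every `a` and `∑ m a = n - t`. Keeping, for
each `a`, some `m a` of the positions where `x` equals `a`, and reading the kept positions in
increasing order, gives the required subsequence `y`.
-/

open Finset

theorem IsType.length_pos {ℓ k : ℕ} {P : Fin ℓ → ℚ} (hP : IsType ℓ k P) : 0 < k := by
  refine Nat.pos_of_ne_zero fun hk => ?_
  have hP0 : ∀ a, P a = 0 := fun a => by
    obtain ⟨m, hm⟩ := hP.1 a
    simp [hm, hk]
  simpa [hP0] using hP.2

theorem natCast_mul_vecType {n ℓ : ℕ} (x : Fin n → Fin ℓ) (a : Fin ℓ) :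
    (n : ℚ) * vecType x a = #{i | x i = a} := by
  rcases Nat.eq_zero_or_pos n with rfl | hn
  · simp
  · have : (n : ℚ) ≠ 0 := by positivity
    simp only [vecType]
    field_simp

theorem sum_card_filter_eq_card {ι α : Type*} [Fintype ι] [Fintype α] [DecidableEq α]
    (f : ι → α) : ∑ a, #{i | f i = a} = Fintype.card ι :=
  (card_eq_sum_card_fiberwise fun i _ => mem_univ (f i)).symm

theorem TypeAfterDel.le_card_and_sum_add_eq {ℓ n t : ℕ} {x : Fin n → Fin ℓ} {P : Fin ℓ → ℚ}
    {m : Fin ℓ → ℕ} (hm : ∀ a, ((n - t : ℕ) : ℚ) * P a = m a)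
    (h : TypeAfterDel ℓ n t P (vecType x)) :
    (∀ a, m a ≤ #{i | x i = a}) ∧ ∑ a, m a + t = n := by
  refine ⟨fun a => ?_, ?_⟩
  · exact_mod_cast (hm a ▸ natCast_mul_vecType x a ▸ h.1 a)
  · have hsum := h.2
    simp only [natCast_mul_vecType, hm, sum_sub_distrib] at hsum
    have hc : ∑ a, (#{i | x i = a} : ℚ) = n := by
      exact_mod_cast (sum_card_filter_eq_card x).trans (Fintype.card_fin n)
    rw [hc] at hsum
    have : ((∑ a, m a : ℕ) : ℚ) + t = n := by
      push_cast
      linarith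
    exact_mod_cast this

theorem exists_finset_card_filter_eq {ι α : Type*} [Fintype ι] [Fintype α] [DecidableEq α]
    (f : ι → α) (m : α → ℕ) (hm : ∀ a, m a ≤ #{i | f i = a}) :
    ∃ T : Finset ι, ∀ a, #{i ∈ T | f i = a} = m a := by
  classical
  choose S hS hcard using fun a => exists_subset_card_eq (hm a)
  have hfiber : ∀ a, ∀ i ∈ S a, f i = a := fun a i hi => (mem_filter.mp (hS a hi)).2
  refine ⟨univ.biUnion S, fun a => ?_⟩
  suffices {i ∈ univ.biUnion S | f i = a} = S a by rw [this, hcard]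
  ext i
  simp only [mem_filter, mem_biUnion, mem_univ, true_and]
  constructor
  · rintro ⟨⟨b, hib⟩, rfl⟩
    rwa [hfiber b i hib]
  · exact fun hi => ⟨⟨a, hi⟩, hfiber a i hi⟩

theorem card_filter_orderEmbOfFin {α : Type*} [LinearOrder α] (s : Finset α) {k : ℕ}
    (h : #s = k) (p : α → Prop) [DecidablePred p] :
    #{j | p (s.orderEmbOfFin h j)} = #{i ∈ s | p i} := by
  conv_rhs => rw [← map_orderEmbOfFin_univ s h, filter_map, card_map]
  rfl

theorem exists_strictMono_card_filter_comp_eq {n : ℕ} {α : Type*} [Fintype α] [DecidableEq α]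
    (x : Fin n → α) (m : α → ℕ) (hm : ∀ a, m a ≤ #{i | x i = a}) {k : ℕ} (hk : ∑ a, m a = k) :
    ∃ φ : Fin k → Fin n, StrictMono φ ∧ ∀ a, #{j | x (φ j) = a} = m a := by
  obtain ⟨T, hT⟩ := exists_finset_card_filter_eq x m hm
  have hTcard : #T = k := by
    rw [card_eq_sum_card_fiberwise fun i _ => mem_univ (x i), ← hk]
    exact sum_congr rfl fun a _ => hT a
  exact ⟨T.orderEmbOfFin hTcard, (T.orderEmbOfFin hTcard).strictMono,
    fun a => (card_filter_orderEmbOfFin T hTcard _).trans (hT a)⟩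

theorem deletion_of_type_general (ℓ n t : ℕ) (x : Fin n → Fin ℓ)
    (P1 : Fin ℓ → ℚ) (hP1 : IsType ℓ (n - t) P1)
    (h : TypeAfterDel ℓ n t P1 (vecType x)) :
    ∃ (y : Fin (n - t) → Fin ℓ) (φ : Fin (n - t) → Fin n),
      StrictMono φ ∧ (∀ j, y j = x (φ j)) ∧ vecType y = P1 := by
  have hk : ((n - t : ℕ) : ℚ) ≠ 0 := by exact_mod_cast hP1.length_pos.ne'
  choose m hm using hP1.1
  have hmP : ∀ a, ((n - t : ℕ) : ℚ) * P1 a = m a := fun a => by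
    rw [hm a]
    field_simp
  obtain ⟨hle, hsum⟩ := h.le_card_and_sum_add_eq hmP
  obtain ⟨φ, hφ, hcount⟩ :=
    exists_strictMono_card_filter_comp_eq x m hle (by omega : ∑ a, m a = n - t)
  refine ⟨x ∘ φ, φ, hφ, fun _ => rfl, funext fun a => ?_⟩
  rw [hm a]
  exact congrArg (fun c : ℕ => (c : ℚ) / (n - t : ℕ)) (hcount a)

/-- Conversely, every type of `P_x` after `t` deletions is realized
by some vector obtained from `x` by deleting `t` components. -/
theorem deletion_of_type (ℓ n t : ℕ) (ht : t ≤ n) (x : Fin n → Fin ℓ)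
    (P1 : Fin ℓ → ℚ) (hP1 : IsType ℓ (n - t) P1)
    (h : TypeAfterDel ℓ n t P1 (vecType x)) :
    ∃ (y : Fin (n - t) → Fin ℓ) (φ : Fin (n - t) → Fin n),
      StrictMono φ ∧ (∀ j, y j = x (φ j)) ∧ vecType y = P1 :=
  deletion_of_type_general ℓ n t x P1 hP1 h
end

section
/- Marker-sequence deletion recovery: Let x = (0,1,...,t,0,1,...,t,0,1,...) ∈ Z_{t+1}^n be the periodic sequence with x_i = (i−1) mod (t+1). If y is obtained from x by deleting at most t components, then the set of deleted positions is uniquely determined by y; that is, if y can be obtained from x by deleting position-sets S and S' each of size at most t, then S = S'. -/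
/-!
The `k`-th surviving symbol of `x` sits at position `k + s`, where `s` is the number of deleted
positions before it, so `0 ≤ s ≤ t`; its value `(k + s) mod (t + 1)` therefore determines `s`.
Hence `y` determines every surviving position, and with it the deleted set.
-/

open Finset

theorem Nat.ModEq.eq_of_lt_add_of_lt_add {m a b : ℕ} (h : a ≡ b [MOD m]) (ha : a < b + m)
    (hb : b < a + m) : a = b :=
  le_antisymm (h.le_of_lt_add ha) (h.symm.le_of_lt_add hb)

theorem List.SortedLT.le_getElem {l : List ℕ} (hl : l.SortedLT) :
    ∀ (k : ℕ) (hk : k < l.length), k ≤ l[k]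
  | 0, _ => Nat.zero_le _
  | k + 1, hk =>
    (hl.le_getElem k (by omega)).trans_lt (hl.getElem_lt_getElem_iff.2 k.lt_succ_self)

def keptPositions (n : ℕ) (S : Finset ℕ) : List ℕ := (List.range n).filter (· ∉ S)

section keptPositions

variable {n : ℕ} {S S' : Finset ℕ}

theorem mem_keptPositions {i : ℕ} : i ∈ keptPositions n S ↔ i < n ∧ i ∉ S := by
  simp [keptPositions]

theorem keptPositions_sortedLT : (keptPositions n S).SortedLT :=
  (List.pairwise_lt_range.filter _).sortedLT

theorem eq_of_keptPositions_eq (hS : S ⊆ range n) (hS' : S' ⊆ range n)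
    (h : keptPositions n S = keptPositions n S') : S = S' := by
  ext i
  have hi := congrArg (i ∈ ·) h
  have := @hS i
  have := @hS' i
  simp only [mem_keptPositions, eq_iff_iff, mem_range] at *
  tauto

theorem getElem_keptPositions_le_add_card (k : ℕ) (hk : k < (keptPositions n S).length) :
    (keptPositions n S)[k] ≤ k + #S := by
  have hcover :
      range ((keptPositions n S)[k] + 1) ⊆ S ∪ ((keptPositions n S).take (k + 1)).toFinset := by
    intro j hj
    by_cases hjS : j ∈ S
    · exact mem_union_left _ hjS
    have hjkept : j ∈ keptPositions n S := mem_keptPositions.2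
      ⟨(mem_range.1 hj).trans_le (mem_keptPositions.1 (List.getElem_mem hk)).1, hjS⟩
    obtain ⟨k', hk', rfl⟩ := List.getElem_of_mem hjkept
    have : k' ≤ k :=
      keptPositions_sortedLT.getElem_le_getElem_iff.1 (Nat.lt_succ_iff.1 (mem_range.1 hj))
    exact mem_union_right _
      (List.mem_toFinset.2 (List.mem_take_iff_getElem.2 ⟨k', by omega, rfl⟩))
  suffices (keptPositions n S)[k] + 1 ≤ k + #S + 1 by omega
  calc (keptPositions n S)[k] + 1 = #(range ((keptPositions n S)[k] + 1)) := (card_range _).symm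
    _ ≤ #S + #((keptPositions n S).take (k + 1)).toFinset :=
      (card_le_card hcover).trans (card_union_le _ _)
    _ ≤ #S + (k + 1) :=
      Nat.add_le_add_left ((List.toFinset_card_le _).trans (List.length_take_le _ _)) _
    _ = k + #S + 1 := by ring

theorem keptPositions_eq_of_map_mod_eq {t : ℕ} (hcS : #S ≤ t) (hcS' : #S' ≤ t)
    (h : (keptPositions n S).map (· % (t + 1)) = (keptPositions n S').map (· % (t + 1))) :
    keptPositions n S = keptPositions n S' := by
  have hlen : (keptPositions n S).length = (keptPositions n S').length := by
    simpa using congrArg List.length h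
  refine List.ext_getElem hlen fun k hk hk' => ?_
  have hmod : (keptPositions n S)[k] ≡ (keptPositions n S')[k] [MOD t + 1] := by
    simpa [Nat.ModEq, hk, hk'] using congrArg (·[k]?) h
  have hlo := keptPositions_sortedLT.le_getElem k hk
  have hlo' := keptPositions_sortedLT.le_getElem k hk'
  have hhi := getElem_keptPositions_le_add_card k hk
  have hhi' := getElem_keptPositions_le_add_card k hk'
  exact hmod.eq_of_lt_add_of_lt_add (by omega) (by omega)

end keptPositions

/-- Deleting at most `t` positions from the periodic marker sequence
`x_i = (i-1) mod (t+1)` determines the deleted position set uniquely. -/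
theorem marker_deletion_unique (t n : ℕ) (S S' : Finset ℕ)
    (hS : S ⊆ Finset.range n) (hS' : S' ⊆ Finset.range n)
    (hcS : S.card ≤ t) (hcS' : S'.card ≤ t)
    (h : ((List.range n).filter (fun i => i ∉ S)).map (fun i => i % (t + 1))
        = ((List.range n).filter (fun i => i ∉ S')).map (fun i => i % (t + 1))) :
    S = S' :=
  eq_of_keptPositions_eq hS hS' (keptPositions_eq_of_map_mod_eq hcS hcS' h)
end

section
/- In the periodic marker sequence x ∈ Z_{t+1}^n with x_i = (i−1) mod (t+1), for every k ≤ t the map S ↦ (x with positions S deleted) is injective on the subsets of {1,...,n} of size k; that is, deleting two different sets of k positions each from x yields distinct vectors. -/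
lemma marker_aux (t n : ℕ) (S S' : Finset ℕ)
    (hcard : S.card ≤ t)
    (h : ((List.range n).filter (fun i => i ∉ S)).map (fun i => i % (t + 1))
        = ((List.range n).filter (fun i => i ∉ S')).map (fun i => i % (t + 1)))
    (i : ℕ) (hiS : i ∈ S) (hiS' : i ∉ S') (hin : i < n)
    (hmin : ∀ m < i, (m ∈ S ↔ m ∈ S')) : False := by
  have hrange : List.range n = List.range i ++ List.range' i (n - i) := by
    rw [List.range_eq_range', List.range_eq_range']
    rw [show n = n - i + i by omega]
    simpa [Nat.sub_add_cancel hin.le, Nat.add_sub_of_le hin.le] using (List.range'_append (s := 0) (m := i) (n := n - i) (step := 1)).symm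
  have hpre : (List.range i).filter (fun m => m ∉ S)
      = (List.range i).filter (fun m => m ∉ S') := by
    apply List.filter_congr
    intro a ha
    simp only [List.mem_range] at ha
    simp [hmin a ha]
  rw [hrange, List.filter_append, List.filter_append, List.map_append, List.map_append,
    hpre] at h
  have hsuf := List.append_cancel_left h
  have hni : n - i = (n - i - 1) + 1 := by omega
  have hB : (List.range' i (n - i)).filter (fun m => decide (m ∉ S'))
      = i :: (List.range' (i+1) (n-i-1)).filter (fun m => decide (m ∉ S')) := by
    rw [hni, List.range'_succ]
    simp [List.filter_cons, hiS']
  rw [hB] at hsuf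
  cases hA : (List.range' i (n - i)).filter (fun m => decide (m ∉ S)) with
  | nil => rw [hA] at hsuf; simp at hsuf
  | cons j rest =>
    rw [hA] at hsuf
    simp only [List.map_cons, List.cons.injEq] at hsuf
    have hjmem : j ∈ (List.range' i (n - i)).filter (fun m => decide (m ∉ S)) := by
      rw [hA]; exact List.mem_cons_self
    have hjS : j ∉ S := by simpa using List.of_mem_filter hjmem
    have hjr := List.mem_of_mem_filter hjmem
    rw [List.mem_range'_1] at hjr
    have hij : i < j := by
      rcases Nat.lt_or_ge i j with h1 | h1
      · exact h1
      · have : j = i ∨ j < i := by omega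
        rcases this with rfl | h2
        · exact absurd hiS hjS
        · omega
    have hIco : ∀ m, i ≤ m → m < j → m ∈ S := by
      intro m him hmj
      by_contra hmS
      have hmmem : m ∈ (List.range' i (n - i)).filter (fun m => decide (m ∉ S)) := by
        refine List.mem_filter.mpr ⟨?_, by simpa using hmS⟩
        rw [List.mem_range'_1]
        omega
      have hpw : ((List.range' i (n - i)).filter (fun m => decide (m ∉ S))).Pairwise (· < ·) :=
        (List.pairwise_lt_range' (s := i) (n := n - i)).filter _
      rw [hA] at hmmem hpw
      rcases List.mem_cons.mp hmmem with rfl | hmr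
      · omega
      · have := (List.pairwise_cons.mp hpw).1 m hmr
        omega
    have hsub : Finset.Ico i j ⊆ S := by
      intro m hm
      rw [Finset.mem_Ico] at hm
      exact hIco m hm.1 hm.2
    have hcIco : j - i ≤ t := by
      have h1 := Finset.card_le_card hsub
      rw [Nat.card_Ico] at h1
      omega
    have hmod : i % (t + 1) = j % (t + 1) := hsuf.1.symm
    have hdvd : (t + 1) ∣ (j - i) := (Nat.modEq_iff_dvd' hij.le).mp hmod
    have := Nat.le_of_dvd (by omega) hdvd
    omega

/-- On the periodic marker sequence `x_i = (i-1) mod (t+1)`, the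
deletion map `S ↦ (x with positions S deleted)` is injective on subsets of
`{1,...,n}` of a fixed size `k ≤ t`. -/
theorem marker_deletion_injective (t n k : ℕ) (hk : k ≤ t) (S S' : Finset ℕ)
    (hS : S ⊆ Finset.range n) (hS' : S' ⊆ Finset.range n)
    (hcS : S.card = k) (hcS' : S'.card = k)
    (h : ((List.range n).filter (fun i => i ∉ S)).map (fun i => i % (t + 1))
        = ((List.range n).filter (fun i => i ∉ S')).map (fun i => i % (t + 1))) :
    S = S' := by
  by_contra hne
  have hD : (symmDiff S S').Nonempty := by
    rw [Finset.nonempty_iff_ne_empty]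
    intro hcon
    exact hne (by simpa [symmDiff_eq_bot, Finset.bot_eq_empty] using hcon)
  set i := (symmDiff S S').min' hD with hi
  have himem : i ∈ symmDiff S S' := Finset.min'_mem _ _
  have hmin : ∀ m < i, (m ∈ S ↔ m ∈ S') := by
    intro m hm
    by_contra hc
    have hmem : m ∈ symmDiff S S' := by
      rw [Finset.mem_symmDiff]; tauto
    have := Finset.min'_le _ _ hmem
    omega
  rw [Finset.mem_symmDiff] at himem
  rcases himem with ⟨h1, h2⟩ | ⟨h1, h2⟩
  · exact marker_aux t n S S' (hcS ▸ hk) h i h1 h2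
      (Finset.mem_range.mp (hS h1)) hmin
  · exact marker_aux t n S' S (hcS' ▸ hk) h.symm i h1 h2
      (Finset.mem_range.mp (hS' h1)) (fun m hm => (hmin m hm).symm)
end

section
/- Given n, ℓ, t with t < n, if R is a type of length n−t and P a type of length n such that R is a type of P after t deletions, then the number of strictly increasing injections φ : {1,...,n−t} → {1,...,n} such that the resulting deleted vector of x has type R is the same for all x ∈ T(P); that is, it depends only on P and R, not on the particular x. -/
private lemma count_filter_image {n k ℓ : ℕ} (x : Fin n → Fin ℓ) (φ : Fin k → Fin n)
    (hφ : Function.Injective φ) (a : Fin ℓ) :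
    ((Finset.univ.image φ).filter (fun i => x i = a)).card
      = (Finset.univ.filter (fun j => x (φ j) = a)).card := by
  rw [Finset.filter_image, Finset.card_image_of_injective _ hφ]

private lemma card_patterns {ℓ n : ℕ} (k : ℕ) (x : Fin n → Fin ℓ) (R : Fin ℓ → ℚ) :
    Nat.card {φ : Fin k → Fin n // StrictMono φ ∧ vecType (fun j => x (φ j)) = R}
      = Nat.card {S : Finset (Fin n) // S.card = k ∧
          ∀ a, ((S.filter (fun i => x i = a)).card : ℚ) / (k : ℚ) = R a} := by
  apply Nat.card_congr
  have himg : ∀ (S : Finset (Fin n)) (h : S.card = k),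
      Finset.univ.image (⇑(S.orderEmbOfFin h)) = S := by
    intro S h
    apply Finset.coe_injective
    rw [Finset.coe_image, Finset.coe_univ, Set.image_univ, Finset.range_orderEmbOfFin]
  refine ⟨fun φ => ⟨Finset.univ.image φ.1, ?_, ?_⟩,
    fun S => ⟨⇑(S.1.orderEmbOfFin S.2.1), (S.1.orderEmbOfFin S.2.1).strictMono, ?_⟩, ?_, ?_⟩
  · rw [Finset.card_image_of_injective _ φ.2.1.injective, Finset.card_univ, Fintype.card_fin]
  · intro a
    rw [count_filter_image x φ.1 φ.2.1.injective a]
    exact congrFun φ.2.2 a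
  · funext a
    show ((Finset.univ.filter (fun j => x (S.1.orderEmbOfFin S.2.1 j) = a)).card : ℚ) / (k : ℚ)
      = R a
    rw [← count_filter_image x _ (S.1.orderEmbOfFin S.2.1).injective a, himg S.1 S.2.1]
    exact S.2.2 a
  · intro φ
    apply Subtype.ext
    exact (Finset.orderEmbOfFin_unique _ (fun i => Finset.mem_image_of_mem _ (Finset.mem_univ i))
      φ.2.1).symm
  · intro S
    apply Subtype.ext
    exact himg S.1 S.2.1

/-- The number of deletion patterns of `x ∈ T(P)` producing a vector
of type `R` depends only on `P` and `R`, not on the particular `x ∈ T(P)`. -/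
theorem deletion_pattern_count_const (ℓ n t : ℕ) (ht : t < n)
    (P R : Fin ℓ → ℚ) (hP : IsType ℓ n P) (hR : IsType ℓ (n - t) R)
    (hRP : TypeAfterDel ℓ n t R P)
    (x y : Fin n → Fin ℓ) (hx : vecType x = P) (hy : vecType y = P) :
    Nat.card {φ : Fin (n - t) → Fin n //
        StrictMono φ ∧ vecType (fun j => x (φ j)) = R}
      = Nat.card {φ : Fin (n - t) → Fin n //
          StrictMono φ ∧ vecType (fun j => y (φ j)) = R} := by
  classical
  have hn0 : (n : ℚ) ≠ 0 := by
    have : 0 < n := lt_of_le_of_lt (Nat.zero_le t) ht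
    exact_mod_cast this.ne'
  -- equal letter counts
  have hcount : ∀ a, (Finset.univ.filter (fun i => x i = a)).card
      = (Finset.univ.filter (fun i => y i = a)).card := by
    intro a
    have h1 : vecType x a = vecType y a := by rw [hx, hy]
    unfold vecType at h1
    field_simp at h1
    exact_mod_cast h1
  -- a permutation σ with y ∘ σ = x
  have hcards : ∀ a : Fin ℓ, Fintype.card {i // x i = a} = Fintype.card {i // y i = a} := by
    intro a
    rw [Fintype.card_subtype, Fintype.card_subtype]
    exact hcount a
  let e : ∀ a : Fin ℓ, {i // x i = a} ≃ {i // y i = a} :=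
    fun a => Fintype.equivOfCardEq (hcards a)
  let σ : Fin n ≃ Fin n :=
    (Equiv.sigmaFiberEquiv x).symm.trans
      ((Equiv.sigmaCongrRight e).trans (Equiv.sigmaFiberEquiv y))
  have hσ : ∀ i, y (σ i) = x i := fun i => (e (x i) ⟨i, rfl⟩).2
  have hσ' : ∀ i, x (σ.symm i) = y i := fun i => by
    rw [← hσ (σ.symm i), Equiv.apply_symm_apply]
  rw [card_patterns, card_patterns]
  apply Nat.card_congr
  refine ⟨fun S => ⟨S.1.image σ, ?_, ?_⟩, fun S => ⟨S.1.image σ.symm, ?_, ?_⟩, ?_, ?_⟩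
  · rw [Finset.card_image_of_injective _ σ.injective]; exact S.2.1
  · intro a
    rw [Finset.filter_image, Finset.card_image_of_injective _ σ.injective]
    simp only [hσ]
    exact S.2.2 a
  · rw [Finset.card_image_of_injective _ σ.symm.injective]; exact S.2.1
  · intro a
    rw [Finset.filter_image, Finset.card_image_of_injective _ σ.symm.injective]
    simp only [hσ']
    exact S.2.2 a
  · intro S
    apply Subtype.ext
    show (S.1.image σ).image σ.symm = S.1
    rw [Finset.image_image]
    simp
  · intro S
    apply Subtype.ext
    show (S.1.image σ.symm).image σ = S.1
    rw [Finset.image_image]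
    simp
end
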